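/- arXiv:1709.10457 — 3 statements merged into one kernel-verified Lean document; each statement's English description precedes it below -/
import Mathlib

section
/- Let μ be a locally finite Borel measure on ℝ^d, let 𝒮 be a countable collection of Borel subsets of ℝ^d, let C ≥ 1, and let {λ_S}_{S∈𝒮} be a family of non-negative reals. Then the following two assertions are equivalent: (i) for every subcollection 𝒮′ ⊆ 𝒮 one has ∑_{S∈𝒮′} λ_S ≤ C · μ(⋃_{S∈𝒮′} S); (ii) for every family {a_S}_{S∈𝒮} of non-negative reals, ∑_{S∈𝒮} λ_S a_S ≤ C · ∫ sup_{S∈𝒮} a_S 1_S dμ, where 1_S denotes the indicator function of S and the supremum is taken pointwise. -/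
/-!
Layer-cake formula: with `f = sup_S a_S 1_S` we have
`∑ λ_S a_S = ∫₀^∞ ∑_{a_S > t} λ_S dt`. At every level `t`, the Carleson condition bounds the
inner sum by `C μ(⋃_{a_S > t} S) ≤ C μ{f > t}`, and `∫₀^∞ μ{f > t} dt = ∫ f dμ`. Conversely,
testing the dual estimate on `a = 1_𝒮'` gives the Carleson condition, because
`sup_S a_S 1_S` is then the indicator of `⋃_{S ∈ 𝒮'} S`.
-/

open MeasureTheory Set
open scoped NNReal ENNReal

theorem volume_Ioi_zero_restrict_ofReal_lt (c : ℝ≥0∞) :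
    volume.restrict (Ioi (0 : ℝ)) {t | ENNReal.ofReal t < c} = c := by
  rw [Measure.restrict_apply' measurableSet_Ioi]
  rcases eq_or_ne c ⊤ with rfl | hc
  · simp [ENNReal.ofReal_lt_top, Real.volume_Ioi]
  · have : {t : ℝ | ENNReal.ofReal t < c} ∩ Ioi 0 = Ioo 0 c.toReal := by
      ext t
      simp only [mem_inter_iff, mem_ofPred, mem_Ioi, mem_Ioo]
      exact (and_congr_left fun ht : 0 < t => ENNReal.ofReal_lt_iff_lt_toReal ht.le hc).trans
        and_comm
    rw [this, Real.volume_Ioo, sub_zero, ENNReal.ofReal_toReal hc]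

theorem iSup_indicator_indicator_one {α ι : Type*} (S : ι → Set α) (T : Set ι) (x : α) :
    ⨆ i, (S i).indicator (fun _ => T.indicator (1 : ι → ℝ≥0∞) i) x
      = (⋃ i ∈ T, S i).indicator 1 x := by
  simp only [indicator_iUnion_apply bot_eq_zero]
  refine iSup_congr fun i => ?_
  by_cases hi : i ∈ T <;> simp [hi, Pi.one_def]

section

variable {α : Type*} [MeasurableSpace α] {μ : Measure α}

theorem lintegral_eq_lintegral_Ioi_meas_ofReal_lt [SFinite μ] {f : α → ℝ≥0∞}
    (hf : Measurable f) :
    ∫⁻ x, f x ∂μ = ∫⁻ t in Ioi 0, μ {x | ENNReal.ofReal t < f x} := by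
  have hE : MeasurableSet {p : ℝ × α | ENNReal.ofReal p.1 < f p.2} :=
    measurableSet_lt (ENNReal.measurable_ofReal.comp measurable_fst) (hf.comp measurable_snd)
  calc ∫⁻ x, f x ∂μ
      = ∫⁻ x, volume.restrict (Ioi (0 : ℝ)) {t | ENNReal.ofReal t < f x} ∂μ := by
        simp only [volume_Ioi_zero_restrict_ofReal_lt]
    -- Tonelli: both sides are the product measure of the region under the graph of `f`.
    _ = ∫⁻ t in Ioi 0, μ {x | ENNReal.ofReal t < f x} :=
        (Measure.prod_apply_symm hE).symm.trans (Measure.prod_apply hE)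

variable {ι : Type*} [Countable ι] {S : ι → Set α} {C : ℝ≥0∞} {lam : ι → ℝ≥0∞}

theorem tsum_mul_le_lintegral_iSup_indicator_of_carleson [SFinite μ]
    (hS : ∀ i, MeasurableSet (S i))
    (hcarleson : ∀ T : Set ι, ∑' i : T, lam i ≤ C * μ (⋃ i ∈ T, S i)) (a : ι → ℝ≥0∞) :
    ∑' i, lam i * a i ≤ C * ∫⁻ x, ⨆ i, (S i).indicator (fun _ => a i) x ∂μ := by
  set f : α → ℝ≥0∞ := fun x => ⨆ i, (S i).indicator (fun _ => a i) x
  have hf : Measurable f := .iSup fun i => measurable_const.indicator (hS i)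
  have hlevel_meas (c : ℝ≥0∞) : MeasurableSet {t : ℝ | ENNReal.ofReal t < c} :=
    measurableSet_lt ENNReal.measurable_ofReal measurable_const
  have hlevel_sub (t : ℝ) :
      (⋃ i ∈ {i | ENNReal.ofReal t < a i}, S i) ⊆ {x | ENNReal.ofReal t < f x} := by
    intro x hx
    obtain ⟨i, hi, hxi⟩ := mem_iUnion₂.mp hx
    show ENNReal.ofReal t < ⨆ j, (S j).indicator (fun _ => a j) x
    exact lt_of_lt_of_le hi (le_iSup_of_le i (indicator_of_mem hxi fun _ => a i).ge)
  have hdistribution_meas : Measurable fun t : ℝ => μ {x | ENNReal.ofReal t < f x} :=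
    Antitone.measurable fun s t hst =>
      measure_mono fun x hx => (ENNReal.ofReal_le_ofReal hst).trans_lt hx
  calc ∑' i, lam i * a i
      = ∑' i, ∫⁻ t in Ioi 0, {t | ENNReal.ofReal t < a i}.indicator (fun _ => lam i) t := by
        refine tsum_congr fun i => ?_
        rw [lintegral_indicator_const (hlevel_meas _), volume_Ioi_zero_restrict_ofReal_lt,
          mul_comm]
    _ = ∫⁻ t in Ioi 0, ∑' i : {i | ENNReal.ofReal t < a i}, lam i := by
        rw [← lintegral_tsum fun i =>
          (measurable_const.indicator (hlevel_meas _)).aemeasurable]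
        refine lintegral_congr fun t => ?_
        rw [tsum_subtype]
        rfl
    _ ≤ ∫⁻ t in Ioi 0, C * μ {x | ENNReal.ofReal t < f x} :=
        lintegral_mono fun t => (hcarleson _).trans (by gcongr; exact hlevel_sub t)
    _ = C * ∫⁻ x, f x ∂μ := by
        rw [lintegral_const_mul _ hdistribution_meas,
          lintegral_eq_lintegral_Ioi_meas_ofReal_lt hf]

theorem carleson_of_tsum_mul_le_lintegral_iSup_indicator (hS : ∀ i, MeasurableSet (S i))
    (hdual : ∀ a : ι → ℝ≥0, ∑' i, lam i * a i ≤
      C * ∫⁻ x, ⨆ i, (S i).indicator (fun _ => (a i : ℝ≥0∞)) x ∂μ) (T : Set ι) :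
    ∑' i : T, lam i ≤ C * μ (⋃ i ∈ T, S i) := by
  have hcoe (i : ι) : ((T.indicator 1 i : ℝ≥0) : ℝ≥0∞) = T.indicator 1 i := by
    rw [ENNReal.coe_indicator]; rfl
  have hU : MeasurableSet (⋃ i ∈ T, S i) := .biUnion T.to_countable fun i _ => hS i
  have h := hdual (T.indicator 1)
  simp only [hcoe, iSup_indicator_indicator_one, lintegral_indicator_one hU] at h
  rw [tsum_subtype]
  convert h using 3 with i
  by_cases hi : i ∈ T <;> simp [hi]

end

theorem carleson_iff_dual_estimate_general {d : ℕ} (μ : Measure (Fin d → ℝ))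
    [IsLocallyFiniteMeasure μ]
    {ι : Type*} [Countable ι] (S : ι → Set (Fin d → ℝ)) (hS : ∀ i, MeasurableSet (S i))
    (C : ℝ≥0) (lam : ι → ℝ≥0) :
    (∀ T : Set ι, ∑' i : T, (lam i : ℝ≥0∞) ≤ (C : ℝ≥0∞) * μ (⋃ i ∈ T, S i)) ↔
      (∀ a : ι → ℝ≥0, ∑' i, (lam i : ℝ≥0∞) * (a i : ℝ≥0∞) ≤
        (C : ℝ≥0∞) * ∫⁻ x, ⨆ i, (S i).indicator (fun _ => (a i : ℝ≥0∞)) x ∂μ) :=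
  ⟨fun h _ => tsum_mul_le_lintegral_iSup_indicator_of_carleson hS h _,
    carleson_of_tsum_mul_le_lintegral_iSup_indicator hS⟩

/-- Dual reformulation of the Carleson condition, for a countable
collection of Borel sets: the Carleson condition with constant `C` holds iff
`∑ λ_S a_S ≤ C ∫ sup_S a_S 1_S dμ` for every family of non-negative reals `a`. -/
theorem carleson_iff_dual_estimate {d : ℕ} (μ : Measure (Fin d → ℝ))
    [IsLocallyFiniteMeasure μ]
    {ι : Type*} [Countable ι] (S : ι → Set (Fin d → ℝ)) (hS : ∀ i, MeasurableSet (S i))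
    (C : ℝ≥0) (hC : 1 ≤ C) (lam : ι → ℝ≥0) :
    (∀ T : Set ι, ∑' i : T, (lam i : ℝ≥0∞) ≤ (C : ℝ≥0∞) * μ (⋃ i ∈ T, S i)) ↔
      (∀ a : ι → ℝ≥0, ∑' i, (lam i : ℝ≥0∞) * (a i : ℝ≥0∞) ≤
        (C : ℝ≥0∞) * ∫⁻ x, ⨆ i, (S i).indicator (fun _ => (a i : ℝ≥0∞)) x ∂μ) :=
  carleson_iff_dual_estimate_general μ S hS C lam
end

section
/- Let μ be a locally finite Borel measure on ℝ^d, let 𝒮 be a countable collection of Borel subsets of ℝ^d, let C ≥ 1, and let {λ_S}_{S∈𝒮} be non-negative reals satisfying the Carleson condition ∑_{S∈𝒮′} λ_S ≤ C · μ(⋃_{S∈𝒮′} S) for every subcollection 𝒮′ ⊆ 𝒮. Then for every family {a_S}_{S∈𝒮} of non-negative reals, ∑_{S∈𝒮} λ_S a_S ≤ C · ∫ sup_{S∈𝒮} a_S 1_S dμ. -/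
open MeasureTheory Set
open scoped NNReal ENNReal

lemma vol_superlevel (c : ℝ≥0∞) :
    volume ({t : ℝ | ENNReal.ofReal t < c} ∩ Ioi 0) = c := by
  rcases eq_or_ne c ∞ with rfl | hc
  · have : {t : ℝ | ENNReal.ofReal t < ∞} ∩ Ioi 0 = Ioi 0 := by
      ext t; simp [ENNReal.ofReal_lt_top]
    simp [this]
  · have : {t : ℝ | ENNReal.ofReal t < c} ∩ Ioi 0 = Ioo 0 c.toReal := by
      ext t
      simp only [mem_inter_iff, mem_setOf_eq, mem_Ioi, mem_Ioo]
      constructor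
      · rintro ⟨h1, h2⟩
        exact ⟨h2, (ENNReal.ofReal_lt_iff_lt_toReal h2.le hc).1 h1⟩
      · rintro ⟨h1, h2⟩
        exact ⟨(ENNReal.ofReal_lt_iff_lt_toReal h1.le hc).2 h2, h1⟩
    rw [this, Real.volume_Ioo, sub_zero, ENNReal.ofReal_toReal hc]

lemma layercake_ennreal {α : Type*} [MeasurableSpace α] (μ : Measure α) [SFinite μ]
    {f : α → ℝ≥0∞} (hf : Measurable f) :
    ∫⁻ t in Ioi (0:ℝ), μ {x | ENNReal.ofReal t < f x} = ∫⁻ x, f x ∂μ := by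
  have hset : ∀ t : ℝ, MeasurableSet {x | ENNReal.ofReal t < f x} :=
    fun t => measurableSet_lt measurable_const hf
  have h1 : ∀ t : ℝ, μ {x | ENNReal.ofReal t < f x}
      = ∫⁻ x, ({x | ENNReal.ofReal t < f x}).indicator 1 x ∂μ := by
    intro t; rw [lintegral_indicator_one (hset t)]
  simp_rw [h1]
  have hmble : Measurable (Function.uncurry fun (t : ℝ) (x : α) =>
      ({x | ENNReal.ofReal t < f x}).indicator (1 : α → ℝ≥0∞) x) := by
    have : (Function.uncurry fun (t : ℝ) (x : α) =>
        ({x | ENNReal.ofReal t < f x}).indicator (1 : α → ℝ≥0∞) x)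
        = ({p : ℝ × α | ENNReal.ofReal p.1 < f p.2}).indicator 1 := by
      ext p
      simp [Function.uncurry, Set.indicator_apply]
    rw [this]
    exact measurable_one.indicator
      (measurableSet_lt (ENNReal.measurable_ofReal.comp measurable_fst)
        (hf.comp measurable_snd))
  rw [lintegral_lintegral_swap hmble.aemeasurable]
  congr 1
  ext x
  have hrw : (fun t : ℝ => ({x | ENNReal.ofReal t < f x}).indicator (1 : α → ℝ≥0∞) x)
      = fun t : ℝ => ({t : ℝ | ENNReal.ofReal t < f x}).indicator (fun _ => (1 : ℝ≥0∞)) t := by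
    ext t; simp [Set.indicator_apply]
  rw [hrw, lintegral_indicator_const (measurableSet_lt ENNReal.measurable_ofReal measurable_const),
    one_mul, Measure.restrict_apply (measurableSet_lt ENNReal.measurable_ofReal measurable_const)]
  exact vol_superlevel (f x)

/-- The Carleson condition implies the dual estimate, with the same
constant, for a countable collection of Borel sets. -/
theorem carleson_implies_dual_estimate {d : ℕ} (μ : Measure (Fin d → ℝ))
    [IsLocallyFiniteMeasure μ]
    {ι : Type*} [Countable ι] (S : ι → Set (Fin d → ℝ)) (hS : ∀ i, MeasurableSet (S i))
    (C : ℝ≥0) (hC : 1 ≤ C) (lam : ι → ℝ≥0)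
    (hCarleson : ∀ T : Set ι, ∑' i : T, (lam i : ℝ≥0∞) ≤ (C : ℝ≥0∞) * μ (⋃ i ∈ T, S i)) :
    ∀ a : ι → ℝ≥0, ∑' i, (lam i : ℝ≥0∞) * (a i : ℝ≥0∞) ≤
      (C : ℝ≥0∞) * ∫⁻ x, ⨆ i, (S i).indicator (fun _ => (a i : ℝ≥0∞)) x ∂μ := by
  intro a
  set g : (Fin d → ℝ) → ℝ≥0∞ := fun x => ⨆ i, (S i).indicator (fun _ => (a i : ℝ≥0∞)) x
    with hg_def
  have hg : Measurable g := Measurable.iSup fun i => measurable_const.indicator (hS i)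
  -- step 1: rewrite each term as an integral in t
  have step1 : ∀ i, (lam i : ℝ≥0∞) * (a i : ℝ≥0∞)
      = ∫⁻ t in Ioi (0:ℝ), ({t : ℝ | ENNReal.ofReal t < (a i : ℝ≥0∞)}).indicator
          (fun _ => (lam i : ℝ≥0∞)) t := by
    intro i
    rw [lintegral_indicator_const (measurableSet_lt ENNReal.measurable_ofReal measurable_const),
      Measure.restrict_apply (measurableSet_lt ENNReal.measurable_ofReal measurable_const),
      vol_superlevel (a i : ℝ≥0∞)]
  simp_rw [step1]
  rw [← lintegral_tsum (fun i => (measurable_const.indicator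
    (measurableSet_lt ENNReal.measurable_ofReal measurable_const)).aemeasurable)]
  have key : ∀ t ∈ Ioi (0:ℝ),
      (∑' i, ({t : ℝ | ENNReal.ofReal t < (a i : ℝ≥0∞)}).indicator
        (fun _ => (lam i : ℝ≥0∞)) t) ≤ (C : ℝ≥0∞) * μ {x | ENNReal.ofReal t < g x} := by
    intro t ht
    set T : Set ι := {i | ENNReal.ofReal t < (a i : ℝ≥0∞)} with hT
    have h2 : (∑' i, ({t : ℝ | ENNReal.ofReal t < (a i : ℝ≥0∞)}).indicator
        (fun _ => (lam i : ℝ≥0∞)) t) = ∑' i : T, (lam i : ℝ≥0∞) := by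
      rw [show (∑' i : T, (lam ↑i : ℝ≥0∞)) = ∑' i, T.indicator (fun j => (lam j : ℝ≥0∞)) i
        from tsum_subtype T (fun j => (lam j : ℝ≥0∞))]
      refine tsum_congr fun i => ?_
      simp only [Set.indicator_apply, hT, mem_setOf_eq]
    have h3 : (⋃ i ∈ T, S i) = {x | ENNReal.ofReal t < g x} := by
      ext x
      simp only [mem_iUnion, mem_setOf_eq, hg_def, lt_iSup_iff, hT]
      constructor
      · rintro ⟨i, hi, hx⟩
        exact ⟨i, by simpa [Set.indicator_of_mem hx] using hi⟩
      · rintro ⟨i, hi⟩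
        by_cases hx : x ∈ S i
        · exact ⟨i, by simpa [Set.indicator_of_mem hx] using hi, hx⟩
        · rw [Set.indicator_of_notMem hx] at hi
          exact absurd hi (ENNReal.not_lt_zero)
    rw [h2, ← h3]
    exact hCarleson T
  calc ∫⁻ t in Ioi (0:ℝ), ∑' i, ({t : ℝ | ENNReal.ofReal t < (a i : ℝ≥0∞)}).indicator
        (fun _ => (lam i : ℝ≥0∞)) t
      ≤ ∫⁻ t in Ioi (0:ℝ), (C : ℝ≥0∞) * μ {x | ENNReal.ofReal t < g x} :=
        lintegral_mono_ae ((ae_restrict_iff' measurableSet_Ioi).2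
          (Filter.Eventually.of_forall key))
    _ = (C : ℝ≥0∞) * ∫⁻ t in Ioi (0:ℝ), μ {x | ENNReal.ofReal t < g x} :=
        lintegral_const_mul' _ _ ENNReal.coe_ne_top
    _ = (C : ℝ≥0∞) * ∫⁻ x, g x ∂μ := by rw [layercake_ennreal μ hg]
end

section
/- Let μ be a locally finite Borel measure on ℝ^d, let C ≥ 1, and let {λ_Q}_{Q∈𝒟} be non-negative reals indexed by the collection 𝒟 of dyadic cubes of ℝ^d satisfying the usual Carleson condition: for every dyadic cube R ∈ 𝒟, ∑_{Q∈𝒟 : Q⊆R} λ_Q ≤ C · μ(R). Then for every subcollection 𝒟′ ⊆ 𝒟, ∑_{Q∈𝒟′} λ_Q ≤ C · μ(⋃_{Q∈𝒟′} Q). -/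
open MeasureTheory Set
open scoped NNReal ENNReal

/-- A dyadic cube of `ℝ^d` is a set of the form `2^{-k}([0,1)^d + m)`, i.e. the product of
the half-open intervals `[2^{-k} m_j, 2^{-k}(m_j + 1))` for `j = 1, …, d`. -/
def IsDyadicCube {d : ℕ} (Q : Set (Fin d → ℝ)) : Prop :=
  ∃ (k : ℤ) (m : Fin d → ℤ), Q = Set.univ.pi fun j =>
    Set.Ico ((2 : ℝ) ^ (-k) * (m j : ℝ)) ((2 : ℝ) ^ (-k) * ((m j : ℝ) + 1))

/-! Dyadic cubes are nested or disjoint: `x` lies in the cube of scale `k` and index `m` iff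
`⌊2^k x⌋ = m` coordinatewise, and the index at a coarser scale is the floor-quotient of the finer
index by a power of two. Given finitely many cubes, each lies in a maximal one, and the maximal
ones are pairwise disjoint, so summing the usual Carleson condition over the maximal cubes bounds
the whole sum by `C` times the measure of their union. Infinite collections follow by taking the
supremum over finite subsums. -/

def dyadicCube {ι : Type*} (k : ℤ) (m : ι → ℤ) : Set (ι → ℝ) :=
  univ.pi fun j => Ico ((2 : ℝ) ^ (-k) * m j) ((2 : ℝ) ^ (-k) * (m j + 1))

theorem mem_dyadicCube_iff {ι : Type*} {k : ℤ} {m : ι → ℤ} {x : ι → ℝ} :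
    x ∈ dyadicCube k m ↔ ∀ j, ⌊(2 : ℝ) ^ k * x j⌋ = m j := by
  have h2k : (0 : ℝ) < 2 ^ k := by positivity
  simp only [dyadicCube, mem_univ_pi, mem_Ico, Int.floor_eq_iff, zpow_neg, inv_mul_le_iff₀ h2k,
    lt_inv_mul_iff₀ h2k]

theorem floor_two_zpow_mul_eq_div_of_le {k l : ℤ} (h : k ≤ l) (x : ℝ) :
    ⌊(2 : ℝ) ^ k * x⌋ = ⌊(2 : ℝ) ^ l * x⌋ / (2 ^ (l - k).toNat : ℕ) := by
  rw [← Int.floor_div_natCast]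
  congr 1
  rw [Nat.cast_pow, Nat.cast_ofNat, ← zpow_natCast, Int.toNat_of_nonneg (by omega),
    mul_div_right_comm, ← zpow_sub₀ two_ne_zero, sub_sub_cancel]

theorem dyadicCube_subset_of_le {ι : Type*} {k l : ℤ} {m n : ι → ℤ} (h : k ≤ l)
    (hne : (dyadicCube l n ∩ dyadicCube k m).Nonempty) : dyadicCube l n ⊆ dyadicCube k m := by
  obtain ⟨x, hxl, hxk⟩ := hne
  intro y hy
  rw [mem_dyadicCube_iff] at hxl hxk hy ⊢
  intro j
  rw [← hxk j, floor_two_zpow_mul_eq_div_of_le h, floor_two_zpow_mul_eq_div_of_le h, hy, hxl]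

def IsLaminar {α : Type*} (𝒞 : Set (Set α)) : Prop :=
  𝒞.Pairwise fun Q R => Q ⊆ R ∨ R ⊆ Q ∨ Disjoint Q R

theorem isLaminar_setOf_isDyadicCube {d : ℕ} :
    IsLaminar {Q : Set (Fin d → ℝ) | IsDyadicCube Q} := by
  rintro _ ⟨k, m, rfl⟩ _ ⟨l, n, rfl⟩ -
  rcases (dyadicCube k m).disjoint_or_nonempty_inter (dyadicCube l n) with hdisj | hne
  · exact Or.inr (Or.inr hdisj)
  rcases le_total k l with hkl | hlk
  · exact Or.inr (Or.inl (dyadicCube_subset_of_le hkl (inter_comm _ _ ▸ hne)))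
  · exact Or.inl (dyadicCube_subset_of_le hlk hne)

theorem IsDyadicCube.measurableSet {d : ℕ} {Q : Set (Fin d → ℝ)} (hQ : IsDyadicCube Q) :
    MeasurableSet Q := by
  obtain ⟨k, m, rfl⟩ := hQ
  exact MeasurableSet.univ_pi fun _ => measurableSet_Ico

theorem IsLaminar.pairwiseDisjoint_of_maximal {α : Type*} {𝒞 : Set (Set α)} (h𝒞 : IsLaminar 𝒞)
    {S M : Set 𝒞} (hM : ∀ R ∈ M, Maximal (· ∈ S) R) : M.PairwiseDisjoint Subtype.val := by
  intro R hR R' hR' hne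
  rcases h𝒞 R.2 R'.2 (Subtype.coe_ne_coe.mpr hne) with hle | hle | hdisj
  · exact absurd ((hM R hR).eq_of_le (hM R' hR').1 hle) hne
  · exact absurd ((hM R' hR').eq_of_le (hM R hR).1 hle).symm hne
  · exact hdisj

namespace IsLaminar

variable {α : Type*} [MeasurableSpace α] (μ : Measure α) {𝒞 : Set (Set α)} (C : ℝ≥0∞)
  (lam : 𝒞 → ℝ≥0∞)

theorem sum_le_mul_measure_biUnion (h𝒞 : IsLaminar 𝒞) (hmeas : ∀ Q ∈ 𝒞, MeasurableSet Q)
    (hcarleson : ∀ R : 𝒞, ∑' Q : Iic R, lam Q ≤ C * μ R) (s : Finset 𝒞) :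
    ∑ Q ∈ s, lam Q ≤ C * μ (⋃ Q ∈ s, Q.1) := by
  classical
  set M := s.filter fun R : 𝒞 => Maximal (· ∈ s) R
  have hcover : (s : Set 𝒞) ⊆ ⋃ R ∈ M, Iic R := fun Q hQ => by
    obtain ⟨R, hQR, hR⟩ := s.exists_le_maximal hQ
    exact mem_biUnion (Finset.mem_filter.mpr ⟨hR.1, hR⟩) hQR
  have hdisj : (M : Set 𝒞).PairwiseDisjoint Subtype.val :=
    h𝒞.pairwiseDisjoint_of_maximal fun R hR => (Finset.mem_filter.mp hR).2
  calc ∑ Q ∈ s, lam Q = ∑' Q : (s : Set 𝒞), lam Q := (Finset.tsum_subtype s lam).symm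
    _ ≤ ∑' Q : ⋃ R ∈ M, Iic R, lam Q := ENNReal.tsum_mono_subtype lam hcover
    _ ≤ ∑ R ∈ M, ∑' Q : Iic R, lam Q := ENNReal.tsum_biUnion_le lam M Iic
    _ ≤ ∑ R ∈ M, C * μ R := Finset.sum_le_sum fun R _ => hcarleson R
    _ = C * μ (⋃ R ∈ M, R.1) := by
      rw [← Finset.mul_sum, measure_biUnion_finset hdisj fun R _ => hmeas R R.2]
    _ ≤ C * μ (⋃ Q ∈ s, Q.1) := by
      gcongr C * μ ?_
      exact biUnion_subset_biUnion_left fun R hR => (Finset.mem_filter.mp hR).1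

theorem tsum_le_mul_measure_biUnion (h𝒞 : IsLaminar 𝒞) (hmeas : ∀ Q ∈ 𝒞, MeasurableSet Q)
    (hcarleson : ∀ R : 𝒞, ∑' Q : Iic R, lam Q ≤ C * μ R) (T : Set 𝒞) :
    ∑' Q : T, lam Q ≤ C * μ (⋃ Q ∈ T, Q.1) := by
  refine ENNReal.summable.tsum_le_of_sum_le fun F => ?_
  let incl : T ↪ 𝒞 := Function.Embedding.subtype (· ∈ T)
  calc ∑ Q ∈ F, lam Q = ∑ Q ∈ F.map incl, lam Q := (Finset.sum_map F incl lam).symm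
    _ ≤ C * μ (⋃ Q ∈ F.map incl, Q.1) := h𝒞.sum_le_mul_measure_biUnion μ C lam hmeas hcarleson _
    _ ≤ C * μ (⋃ Q ∈ T, Q.1) := by
      gcongr C * μ ?_
      refine biUnion_subset_biUnion_left fun Q hQ => ?_
      obtain ⟨Q, -, rfl⟩ := Finset.mem_map.mp hQ
      exact Q.2

end IsLaminar

theorem dyadic_carleson_of_usual_carleson_general {d : ℕ} (μ : Measure (Fin d → ℝ))
    (C : ℝ≥0)
    (lam : {Q : Set (Fin d → ℝ) // IsDyadicCube Q} → ℝ≥0)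
    (husual : ∀ R : {Q : Set (Fin d → ℝ) // IsDyadicCube Q},
      ∑' Q : {Q : {Q : Set (Fin d → ℝ) // IsDyadicCube Q} // Q.1 ⊆ R.1},
        (lam Q.1 : ℝ≥0∞) ≤ (C : ℝ≥0∞) * μ R.1) :
    ∀ T : Set {Q : Set (Fin d → ℝ) // IsDyadicCube Q},
      ∑' Q : T, (lam Q : ℝ≥0∞) ≤ (C : ℝ≥0∞) * μ (⋃ Q ∈ T, Q.1) :=
  isLaminar_setOf_isDyadicCube.tsum_le_mul_measure_biUnion μ C (fun Q => lam Q)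
    (fun _ => IsDyadicCube.measurableSet) husual

/-- If non-negative coefficients indexed by the dyadic cubes of `ℝ^d`
satisfy the usual Carleson condition `∑_{Q ⊆ R} λ_Q ≤ C μ(R)` for every dyadic cube `R`,
then `∑_{Q ∈ 𝒟'} λ_Q ≤ C μ(⋃_{Q ∈ 𝒟'} Q)` for every subcollection `𝒟'` of dyadic cubes. -/
theorem dyadic_carleson_of_usual_carleson {d : ℕ} (μ : Measure (Fin d → ℝ))
    [IsLocallyFiniteMeasure μ]
    (C : ℝ≥0) (hC : 1 ≤ C)
    (lam : {Q : Set (Fin d → ℝ) // IsDyadicCube Q} → ℝ≥0)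
    (husual : ∀ R : {Q : Set (Fin d → ℝ) // IsDyadicCube Q},
      ∑' Q : {Q : {Q : Set (Fin d → ℝ) // IsDyadicCube Q} // Q.1 ⊆ R.1},
        (lam Q.1 : ℝ≥0∞) ≤ (C : ℝ≥0∞) * μ R.1) :
    ∀ T : Set {Q : Set (Fin d → ℝ) // IsDyadicCube Q},
      ∑' Q : T, (lam Q : ℝ≥0∞) ≤ (C : ℝ≥0∞) * μ (⋃ Q ∈ T, Q.1) :=
  dyadic_carleson_of_usual_carleson_general μ C lam husual
end
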